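/- Let n ≥ 2 be an integer and δ ∈ (1/2, 1]. Then sup over positive integers m and X ∈ C'(n, m) of P( {max_{1 ≤ i < j ≤ n} |X_i − X_j| ≥ δ} ∩ A ) is at most sup over (H, L) ∈ Λ(n) of λ({x ∈ [0,∞) : H(x) ≥ L(x) + δ}), where λ is Lebesgue measure. -/

import Mathlib

open MeasureTheory
open scoped ENNReal

noncomputable section

/-- A right-continuous step function on `[0, ∞)` with finitely many steps. -/
def IsRCStep (f : ℝ → ℝ) : Prop :=
  ∃ (k : ℕ) (t : Fin (k + 1) → ℝ) (c : Fin (k + 1) → ℝ),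
    t 0 = 0 ∧ StrictMono t ∧
    (∀ i : Fin k, ∀ x ∈ Set.Ico (t i.castSucc) (t i.succ), f x = c i.castSucc) ∧
    (∀ x ∈ Set.Ici (t (Fin.last k)), f x = c (Fin.last k))

/-- The class `Λ(k)` of pairs of functions `(H, L) : [0, ∞) → [0, 1]²`. -/
def Lam (k : ℕ) (H L : ℝ → ℝ) : Prop :=
  (∀ x ∈ Set.Ici (0 : ℝ), 0 ≤ L x ∧ L x ≤ 1 / 2 ∧ 1 / 2 ≤ H x ∧ H x ≤ 1) ∧
  IsRCStep H ∧ IsRCStep L ∧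
  volume ({x | 1 / 2 < H x} ∩ Set.Ici 0) + volume ({x | L x < 1 / 2} ∩ Set.Ici 0) ≤
    (k : ℝ≥0∞) / 2 ∧
  ∀ y ∈ Set.Ioc (0 : ℝ) 1,
    ENNReal.ofReal ((1 - y) / y) *
        (volume ({x | H x = y} ∩ Set.Ici 0) + volume ({x | L x = y} ∩ Set.Ici 0)) =
      volume ({x | H x = 1 - y} ∩ Set.Ici 0) + volume ({x | L x = 1 - y} ∩ Set.Ici 0)

/-- The class `Λ^δ(k)`. -/
def LamDelta (δ : ℝ) (k : ℕ) (H L : ℝ → ℝ) : Prop :=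
  Lam k H L ∧
  {x ∈ Set.Ici (0 : ℝ) | H x ∈ Set.Ioo (1 / 2) δ} = ∅ ∧
  {x ∈ Set.Ici (0 : ℝ) | L x ∈ Set.Ioo (1 - δ) (1 / 2)} = ∅ ∧
  {x ∈ Set.Ici (0 : ℝ) | L x + δ ≤ H x} = {x ∈ Set.Ici (0 : ℝ) | L x < 1 / 2}

/-- The event that some pair of the variables differ by at least `δ`. -/
def maxEvent {Ω : Type} {n : ℕ} (X : Fin n → Ω → ℝ) (δ : ℝ) : Set Ω :=
  {ω | ∃ i j : Fin n, i < j ∧ δ ≤ |X i ω - X j ω|}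

/-- `X` is coherent with associated event `A`. -/
def CoherentWith {Ω : Type} [mΩ : MeasurableSpace Ω] (P : Measure Ω) {n : ℕ}
    (X : Fin n → Ω → ℝ) (A : Set Ω) : Prop :=
  ∃ G : Fin n → MeasurableSpace Ω, (∀ i, G i ≤ mΩ) ∧ MeasurableSet A ∧
    ∀ i, X i =ᵐ[P] P[A.indicator (fun _ => (1 : ℝ)) | G i]

/-- `X ∈ C(n, m)` with associated event `A`. -/
def MemCWith {Ω : Type} [mΩ : MeasurableSpace Ω] (P : Measure Ω) {n : ℕ}
    (X : Fin n → Ω → ℝ) (A : Set Ω) (m : ℕ) : Prop :=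
  CoherentWith P X A ∧ ∀ j, ∃ s : Finset ℝ, s.card ≤ m ∧ ∀ᵐ ω ∂P, X j ω ∈ s

/-- `X ∈ C'(n, m)` with associated event `A`. -/
def MemC'With {Ω : Type} [mΩ : MeasurableSpace Ω] (P : Measure Ω) {n : ℕ}
    (X : Fin n → Ω → ℝ) (A : Set Ω) (m : ℕ) : Prop :=
  MemCWith P X A m ∧ P A = 1 / 2 ∧
    ∀ x ∈ Set.Ioc (0 : ℝ) 1,
      (1 - x) / x * ∑ i : Fin n, (P ({ω | X i ω = x} ∩ A)).toReal =
        ∑ i : Fin n, (P ({ω | X i ω = 1 - x} ∩ A)).toReal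


/-!
Replace each `X i` by its defining conditional expectation `Y i = P[1_A | G i]`: these are
measurable and take, almost surely, finitely many values in `[0, 1]`, so the law of `Y` on `A` is a
finite family of weights `w v` on vectors `v`. Lay out on `[0, ∞)` an interval of length `w v` for
each `v` with `max v - min v ≥ δ`, on which `(H, L) = (max v, min v)`. Since the maximum and the
minimum are two distinct coordinates of `v`, these intervals use at most the weight
`∑ i, P ({Y i = z} ∩ A)` available at each level `z`; the rest of it goes to an interval on which
`H` or `L` (according to the side of `1/2` containing `z`) equals `z` and the other one `1/2`.
Then `λ (H = y) + λ (L = y) = ∑ i, P ({X i = y} ∩ A)` for `y ≠ 1/2`, which turns the balance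
condition of `C'` into condition (4) of `Λ` and gives `λ (H > 1/2) + λ (L < 1/2) ≤ n • P A = n / 2`,
while the first intervals give `λ (H ≥ L + δ) ≥ P (maxEvent X δ ∩ A)`.
-/

/-- On `[0, ∞)`: the value `a` on consecutive intervals of length `l`, for the segments `(l, a)` of
the list in order, and `d` after the last one. -/
def segFun {α : Type*} (d : α) : List (ℝ × α) → ℝ → α
  | [], _ => d
  | (l, a) :: segs, x => if x < l then a else segFun d segs (x - l)

namespace segFun

variable {α : Type*} (d : α)

lemma cons (l : ℝ) (a : α) (segs : List (ℝ × α)) (x : ℝ) :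
    segFun d ((l, a) :: segs) x = if x < l then a else segFun d segs (x - l) := rfl

lemma mem_of_forall_mem {S : Set α} (hd : d ∈ S) :
    ∀ {segs : List (ℝ × α)}, (∀ p ∈ segs, p.2 ∈ S) → ∀ x, segFun d segs x ∈ S
  | [], _, _ => hd
  | (l, a) :: segs, hS, x => by
    rw [cons]
    split_ifs
    · exact hS (l, a) List.mem_cons_self
    · exact mem_of_forall_mem hd (fun p hp => hS p (List.mem_cons_of_mem _ hp)) _

lemma measurable [MeasurableSpace α] : ∀ segs : List (ℝ × α), Measurable (segFun d segs)
  | [] => measurable_const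
  | (l, _) :: segs => Measurable.ite (measurableSet_lt measurable_id measurable_const)
      measurable_const ((measurable segs).comp (measurable_id.sub_const l))

lemma volume_setOf_inter_Ici [MeasurableSpace α] (p : α → Prop) [DecidablePred p]
    (hp : MeasurableSet {a | p a}) (hd : ¬ p d) :
    ∀ {segs : List (ℝ × α)}, (∀ s ∈ segs, 0 ≤ s.1) →
      volume ({x | p (segFun d segs x)} ∩ Set.Ici 0) =
        ENNReal.ofReal (segs.map fun s => if p s.2 then s.1 else 0).sum
  | [], _ => by simp [segFun, hd]
  | (l, a) :: segs, hl => by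
    have hl0 : 0 ≤ l := hl (l, a) List.mem_cons_self
    have htail := volume_setOf_inter_Ici p hp hd (fun s hs => hl s (List.mem_cons_of_mem _ hs))
    have hsplit : {x | p (segFun d ((l, a) :: segs) x)} ∩ Set.Ici 0 =
        ({_x | p a} ∩ Set.Ico 0 l) ∪
          (fun x => x + -l) ⁻¹' ({x | p (segFun d segs x)} ∩ Set.Ici 0) := by
      ext x
      simp only [cons, Set.mem_inter_iff, Set.mem_ofPred_eq, Set.mem_Ici, Set.mem_union,
        Set.mem_Ico, Set.mem_preimage, ← sub_eq_add_neg, sub_nonneg]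
      split_ifs with hx
      · exact ⟨fun h => Or.inl ⟨h.1, h.2, hx⟩, by rintro (h | h) <;> grind⟩
      · constructor
        · exact fun h => Or.inr ⟨h.1, not_lt.mp hx⟩
        · rintro (h | h)
          · exact absurd h.2.2 hx
          · exact ⟨h.1, hl0.trans h.2⟩
    have hdisj : Disjoint ({_x | p a} ∩ Set.Ico 0 l)
        ((fun x => x + -l) ⁻¹' ({x | p (segFun d segs x)} ∩ Set.Ici 0)) :=
      Set.disjoint_left.mpr fun x h h' => by
        simp only [Set.mem_preimage, Set.mem_inter_iff, Set.mem_Ici] at h'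
        linarith [h.2.2, h'.2]
    have hsum : 0 ≤ (segs.map fun s => if p s.2 then s.1 else 0).sum :=
      List.sum_nonneg (by grind)
    rw [hsplit, measure_union hdisj (((measurable d segs) hp).inter measurableSet_Ici |>.preimage
      (measurable_add_const _)), measure_preimage_add_right, htail]
    by_cases ha : p a
    · simp [ha, ENNReal.ofReal_add hl0 hsum]
    · simp [ha]

end segFun

lemma IsRCStep.congr_Ici {f g : ℝ → ℝ} (hg : IsRCStep g) (hfg : ∀ x, 0 ≤ x → f x = g x) :
    IsRCStep f := by
  obtain ⟨k, t, c, ht0, ht, hstep, hlast⟩ := hg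
  have ht_nonneg : ∀ j, 0 ≤ t j := fun j => ht0 ▸ ht.monotone (Fin.zero_le j)
  exact ⟨k, t, c, ht0, ht, fun i x hx => (hfg x ((ht_nonneg _).trans hx.1)).trans (hstep i x hx),
    fun x hx => (hfg x ((ht_nonneg _).trans hx)).trans (hlast x hx)⟩

/-- The breakpoints are `0` followed by those of `g` shifted by `l`. -/
lemma IsRCStep.ite_lt {g : ℝ → ℝ} (hg : IsRCStep g) {l : ℝ} (hl : 0 < l) (c : ℝ) :
    IsRCStep fun x => if x < l then c else g (x - l) := by
  obtain ⟨k, t, v, ht0, ht, hstep, hlast⟩ := hg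
  have ht_nonneg : ∀ j, 0 ≤ t j := fun j => ht0 ▸ ht.monotone (Fin.zero_le j)
  refine ⟨k + 1, Fin.cons 0 fun j => l + t j, Fin.cons c v, rfl, ?_, ?_, ?_⟩
  · rw [Fin.strictMono_iff_lt_succ]
    intro i
    induction i using Fin.cases with
    | zero => simpa [ht0] using hl
    | succ j => simpa [← Fin.succ_castSucc] using ht Fin.castSucc_lt_succ
  · intro i x hx
    induction i using Fin.cases with
    | zero => simp_all
    | succ j =>
      simp only [← Fin.succ_castSucc, Fin.cons_succ, Set.mem_Ico] at hx ⊢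
      rw [if_neg (by linarith [ht_nonneg j.castSucc])]
      exact hstep j (x - l) ⟨by linarith, by linarith⟩
  · intro x hx
    simp only [Fin.last, Set.mem_Ici] at hx ⊢
    rw [show (⟨k + 1, _⟩ : Fin (k + 2)) = (Fin.last k).succ from rfl, Fin.cons_succ] at hx ⊢
    rw [if_neg (by linarith [ht_nonneg (Fin.last k)])]
    exact hlast (x - l) (by simp only [Set.mem_Ici]; linarith)

lemma isRCStep_comp_segFun {α : Type*} (d : α) (f : α → ℝ) :
    ∀ {segs : List (ℝ × α)}, (∀ s ∈ segs, 0 ≤ s.1) → IsRCStep fun x => f (segFun d segs x)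
  | [], _ => ⟨0, fun _ => 0, fun _ => f d, rfl, fun _ _ h => absurd h (by omega), finZeroElim,
      fun _ _ => rfl⟩
  | (l, a) :: segs, hl => by
    have htail := isRCStep_comp_segFun d f fun s hs => hl s (List.mem_cons_of_mem _ hs)
    simp only [segFun.cons, apply_ite f]
    rcases (hl (l, a) List.mem_cons_self).lt_or_eq with hl0 | hl0
    · exact htail.ite_lt hl0 (f a)
    · refine htail.congr_Ici fun x hx => ?_
      simp only at hl0
      rw [if_neg (by linarith), ← hl0, sub_zero]

open Finset

section Weights

variable {ι : Type*} [Fintype ι]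

def coordMax [Nonempty ι] (v : ι → ℝ) : ℝ := univ.sup' univ_nonempty v

def coordMin [Nonempty ι] (v : ι → ℝ) : ℝ := univ.inf' univ_nonempty v

lemma le_coordMax [Nonempty ι] (v : ι → ℝ) (i : ι) : v i ≤ coordMax v := le_sup' v (mem_univ i)

lemma coordMin_le [Nonempty ι] (v : ι → ℝ) (i : ι) : coordMin v ≤ v i := inf'_le v (mem_univ i)

lemma exists_eq_coordMax [Nonempty ι] (v : ι → ℝ) : ∃ i, coordMax v = v i := by
  obtain ⟨i, -, hi⟩ := exists_mem_eq_sup' univ_nonempty v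
  exact ⟨i, hi⟩

lemma exists_eq_coordMin [Nonempty ι] (v : ι → ℝ) : ∃ i, coordMin v = v i := by
  obtain ⟨i, -, hi⟩ := exists_mem_eq_inf' univ_nonempty v
  exact ⟨i, hi⟩

variable (F : Finset (ι → ℝ)) (w : (ι → ℝ) → ℝ) (δ : ℝ)

def valueSet : Finset ℝ := F.biUnion fun v => univ.image v

def levelWeight (y : ℝ) : ℝ := ∑ v ∈ F, w v * #{i | v i = y}

def gapWeight [Nonempty ι] (z : ℝ) : ℝ :=
  ∑ v ∈ F with coordMin v + δ ≤ coordMax v,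
    ((if coordMax v = z then w v else 0) + if coordMin v = z then w v else 0)

def residualWeight [Nonempty ι] (z : ℝ) : ℝ := levelWeight F w z - gapWeight F w δ z

variable {F}

lemma mem_valueSet {v : ι → ℝ} (hv : v ∈ F) (i : ι) : v i ∈ valueSet F :=
  mem_biUnion.mpr ⟨v, hv, mem_image_of_mem v (mem_univ i)⟩

lemma levelWeight_eq_zero {y : ℝ} (hy : y ∉ valueSet F) : levelWeight F w y = 0 :=
  sum_eq_zero fun v hv => by
    rw [card_eq_zero.mpr (filter_eq_empty_iff.mpr fun i _ (h : v i = y) =>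
      hy (h ▸ mem_valueSet hv i)), Nat.cast_zero, mul_zero]

lemma sum_levelWeight :
    ∑ z ∈ valueSet F, levelWeight F w z = Fintype.card ι * ∑ v ∈ F, w v := by
  classical
  simp only [levelWeight]
  rw [sum_comm, mul_sum]
  refine sum_congr rfl fun v hv => ?_
  rw [← mul_sum, ← Nat.cast_sum, ← card_eq_sum_card_fiberwise fun i _ => mem_valueSet hv i,
    card_univ, mul_comm]

lemma sum_gapWeight [Nonempty ι] :
    ∑ z ∈ valueSet F, gapWeight F w δ z = 2 * ∑ v ∈ F with coordMin v + δ ≤ coordMax v, w v := by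
  simp only [gapWeight]
  rw [sum_comm, mul_sum]
  refine sum_congr rfl fun v hv => ?_
  have hv := (mem_filter.mp hv).1
  obtain ⟨i, hi⟩ := exists_eq_coordMax v
  obtain ⟨j, hj⟩ := exists_eq_coordMin v
  rw [sum_add_distrib, sum_ite_eq, sum_ite_eq, hi, hj, if_pos (mem_valueSet hv i),
    if_pos (mem_valueSet hv j)]
  ring

lemma gapWeight_nonneg [Nonempty ι] (hw : ∀ v ∈ F, 0 ≤ w v) (z : ℝ) : 0 ≤ gapWeight F w δ z :=
  sum_nonneg fun v hv => by
    have := hw v (mem_filter.mp hv).1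
    positivity

/-- A vector of spread `δ > 0` has distinct maximum and minimum, each attained by a coordinate,
so its two gap segments never carry more weight at a level than its coordinates do. -/
lemma gapWeight_le_levelWeight [Nonempty ι] (hw : ∀ v ∈ F, 0 ≤ w v) (hδ : 0 < δ) (z : ℝ) :
    gapWeight F w δ z ≤ levelWeight F w z := by
  refine (sum_le_sum fun v hv => ?_).trans
    (sum_le_sum_of_subset_of_nonneg (filter_subset _ F) fun v hv _ => ?_)
  · obtain ⟨hvF, hgap⟩ := mem_filter.mp hv
    have hne : coordMax v ≠ coordMin v := by linarith
    have hcard : ∀ i, v i = z → (1 : ℝ) ≤ #{i | v i = z} := fun i hi => by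
      exact_mod_cast card_pos.mpr ⟨i, mem_filter.mpr ⟨mem_univ i, hi⟩⟩
    obtain ⟨i, hi⟩ := exists_eq_coordMax v
    obtain ⟨j, hj⟩ := exists_eq_coordMin v
    have hw0 := hw v hvF
    split_ifs with h₁ h₂ h₂
    · exact absurd (h₁.trans h₂.symm) hne
    · nlinarith [hcard i (hi ▸ h₁)]
    · nlinarith [hcard j (hj ▸ h₂)]
    · rw [add_zero]
      positivity
  · have := hw v hv
    positivity

lemma residualWeight_nonneg [Nonempty ι] (hw : ∀ v ∈ F, 0 ≤ w v) (hδ : 0 < δ) (z : ℝ) :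
    0 ≤ residualWeight F w δ z :=
  sub_nonneg.mpr (gapWeight_le_levelWeight w δ hw hδ z)

end Weights

section Segments

variable {ι : Type*} [Fintype ι] [Nonempty ι] (F : Finset (ι → ℝ)) (w : (ι → ℝ) → ℝ) (δ : ℝ)

def hlSegments : List (ℝ × ℝ × ℝ) :=
  (F.filter fun v => coordMin v + δ ≤ coordMax v).toList.map
      (fun v => (w v, coordMax v, coordMin v)) ++
    (valueSet F).toList.map fun z => (residualWeight F w δ z, max z (1 / 2), min z (1 / 2))

def hlMass (p : ℝ × ℝ → Prop) [DecidablePred p] : ℝ :=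
  (∑ v ∈ F with coordMin v + δ ≤ coordMax v, if p (coordMax v, coordMin v) then w v else 0) +
    ∑ z ∈ valueSet F, if p (max z (1 / 2), min z (1 / 2)) then residualWeight F w δ z else 0

variable {F w δ}

lemma hlSegments_fst_nonneg (hw : ∀ v ∈ F, 0 ≤ w v) (hδ : 0 < δ) :
    ∀ s ∈ hlSegments F w δ, 0 ≤ s.1 := by
  simp only [hlSegments, List.mem_append, List.mem_map, mem_toList, mem_filter]
  rintro s (⟨v, ⟨hv, -⟩, rfl⟩ | ⟨z, -, rfl⟩)
  · exact hw v hv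
  · exact residualWeight_nonneg w δ hw hδ z

lemma hlSegments_snd_mem (hF : ∀ v ∈ F, ∀ i, v i ∈ Set.Icc 0 1) (hδ : 1 / 2 ≤ δ) :
    ∀ s ∈ hlSegments F w δ, s.2 ∈ Set.Icc (1 / 2) 1 ×ˢ Set.Icc 0 (1 / 2) := by
  simp only [hlSegments, List.mem_append, List.mem_map, mem_toList, mem_filter, valueSet,
    mem_biUnion, mem_image]
  rintro s (⟨v, ⟨hv, hgap⟩, rfl⟩ | ⟨z, ⟨v, hv, i, -, rfl⟩, rfl⟩)
  · obtain ⟨i, hi⟩ := exists_eq_coordMax v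
    obtain ⟨j, hj⟩ := exists_eq_coordMin v
    have := hF v hv i
    have := hF v hv j
    simp only [Set.mem_prod, Set.mem_Icc] at *
    refine ⟨⟨?_, ?_⟩, ?_, ?_⟩ <;> linarith
  · have := hF v hv i
    simp only [Set.mem_prod, Set.mem_Icc] at *
    refine ⟨⟨le_max_right _ _, max_le this.2 (by norm_num)⟩, le_min this.1 (by norm_num),
      min_le_right _ _⟩

lemma hlMass_nonneg (hw : ∀ v ∈ F, 0 ≤ w v) (hδ : 0 < δ) (p : ℝ × ℝ → Prop) [DecidablePred p] :
    0 ≤ hlMass F w δ p := by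
  refine add_nonneg (sum_nonneg fun v hv => ?_) (sum_nonneg fun z _ => ?_) <;> split_ifs
  exacts [hw v (mem_filter.mp hv).1, le_rfl, residualWeight_nonneg w δ hw hδ z, le_rfl]

lemma volume_setOf_segFun_hlSegments (hw : ∀ v ∈ F, 0 ≤ w v) (hδ : 0 < δ)
    (p : ℝ × ℝ → Prop) [DecidablePred p] (hp : MeasurableSet {q | p q}) (hd : ¬ p (1 / 2, 1 / 2)) :
    volume ({x | p (segFun (1 / 2, 1 / 2) (hlSegments F w δ) x)} ∩ Set.Ici 0) =
      ENNReal.ofReal (hlMass F w δ p) := by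
  rw [segFun.volume_setOf_inter_Ici _ p hp hd (hlSegments_fst_nonneg hw hδ)]
  simp [hlSegments, hlMass, Function.comp_def, sum_map_toList]

lemma hlMass_fst_eq_add_hlMass_snd_eq (hw : ∀ v ∈ F, 0 ≤ w v) (hδ : 0 < δ) {y : ℝ}
    (hy : y ≠ 1 / 2) :
    hlMass F w δ (·.1 = y) + hlMass F w δ (·.2 = y) = levelWeight F w y := by
  have hz : ∀ z, ((if max z (1 / 2) = y then residualWeight F w δ z else 0) +
      if min z (1 / 2) = y then residualWeight F w δ z else 0) =
      if z = y then residualWeight F w δ z else 0 := by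
    intro z
    rcases le_total z (1 / 2) with h | h
    · rw [max_eq_right h, min_eq_left h, if_neg hy.symm, zero_add]
    · rw [max_eq_left h, min_eq_right h, if_neg hy.symm, add_zero]
  have hsplit : hlMass F w δ (·.1 = y) + hlMass F w δ (·.2 = y) =
      gapWeight F w δ y + if y ∈ valueSet F then residualWeight F w δ y else 0 := by
    simp only [hlMass, gapWeight, ← sum_ite_eq' (valueSet F) y, ← hz, sum_add_distrib]
    ring
  rw [hsplit]
  split_ifs with hmem
  · rw [residualWeight]
    ring
  · have h0 := levelWeight_eq_zero w hmem
    linarith [gapWeight_nonneg w δ hw y, gapWeight_le_levelWeight w δ hw hδ y]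

lemma hlMass_half_lt_fst_add_hlMass_snd_lt_half (hw : ∀ v ∈ F, 0 ≤ w v) (hδ : 0 < δ) :
    hlMass F w δ (1 / 2 < ·.1) + hlMass F w δ (·.2 < 1 / 2) ≤
      Fintype.card ι * ∑ v ∈ F, w v := by
  have hgap : ∀ v ∈ F.filter fun v => coordMin v + δ ≤ coordMax v,
      ((if 1 / 2 < coordMax v then w v else 0) + if coordMin v < 1 / 2 then w v else 0) ≤
        2 * w v := fun v hv => by
    have := hw v (mem_filter.mp hv).1
    split_ifs <;> linarith
  have hres : ∀ z ∈ valueSet F,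
      ((if 1 / 2 < max z (1 / 2) then residualWeight F w δ z else 0) +
        if min z (1 / 2) < 1 / 2 then residualWeight F w δ z else 0) ≤
        residualWeight F w δ z := fun z _ => by
    have := residualWeight_nonneg w δ hw hδ z
    rcases le_total z (1 / 2) with h | h
    · rw [max_eq_right h, if_neg (lt_irrefl _)]
      split_ifs <;> linarith
    · rw [min_eq_right h, if_neg (lt_irrefl _)]
      split_ifs <;> linarith
  have htotal : ∑ z ∈ valueSet F, residualWeight F w δ z =
      Fintype.card ι * ∑ v ∈ F, w v - 2 * ∑ v ∈ F with coordMin v + δ ≤ coordMax v, w v := by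
    simp only [residualWeight, sum_sub_distrib, sum_levelWeight, sum_gapWeight]
  have h₁ := sum_le_sum hgap
  have h₂ := sum_le_sum hres
  simp only [← mul_sum, sum_add_distrib] at h₁ h₂
  simp only [hlMass]
  linarith

lemma sum_le_hlMass_gap (hw : ∀ v ∈ F, 0 ≤ w v) (hδ : 0 < δ) :
    ∑ v ∈ F with coordMin v + δ ≤ coordMax v, w v ≤ hlMass F w δ fun q => q.2 + δ ≤ q.1 := by
  rw [hlMass, sum_congr rfl fun v hv => if_pos (mem_filter.mp hv).2]
  refine le_add_of_nonneg_right (sum_nonneg fun z _ => ?_)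
  split_ifs
  exacts [residualWeight_nonneg w δ hw hδ z, le_rfl]

end Segments

theorem exists_lam_sum_gap_le_volume {ι : Type*} [Fintype ι] [Nonempty ι]
    {F : Finset (ι → ℝ)} {w : (ι → ℝ) → ℝ} {δ : ℝ} (hδ : 1 / 2 ≤ δ) (hw : ∀ v ∈ F, 0 ≤ w v)
    (hF : ∀ v ∈ F, ∀ i, v i ∈ Set.Icc 0 1) (hmass : ∑ v ∈ F, w v ≤ 1 / 2)
    (hbal : ∀ y ∈ Set.Ioc (0 : ℝ) 1,
      (1 - y) / y * levelWeight F w y = levelWeight F w (1 - y)) :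
    ∃ H L : ℝ → ℝ, Lam (Fintype.card ι) H L ∧
      ∑ v ∈ F with coordMin v + δ ≤ coordMax v, w v ≤
        (volume ({x | L x + δ ≤ H x} ∩ Set.Ici 0)).toReal := by
  have hδ0 : 0 < δ := by linarith
  set f := segFun (1 / 2, 1 / 2) (hlSegments F w δ)
  have hlevel : ∀ y ≠ 1 / 2, volume ({x | (f x).1 = y} ∩ Set.Ici 0) +
      volume ({x | (f x).2 = y} ∩ Set.Ici 0) = ENNReal.ofReal (levelWeight F w y) := by
    intro y hy
    rw [volume_setOf_segFun_hlSegments hw hδ0 (·.1 = y)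
        (measurableSet_eq_fun measurable_fst measurable_const) hy.symm,
      volume_setOf_segFun_hlSegments hw hδ0 (·.2 = y)
        (measurableSet_eq_fun measurable_snd measurable_const) hy.symm,
      ← ENNReal.ofReal_add (hlMass_nonneg hw hδ0 _) (hlMass_nonneg hw hδ0 _),
      hlMass_fst_eq_add_hlMass_snd_eq hw hδ0 hy]
  refine ⟨fun x => (f x).1, fun x => (f x).2, ⟨fun x _ => ?_, ?_, ?_, ?_, fun y hy => ?_⟩, ?_⟩
  · have := segFun.mem_of_forall_mem ((1 / 2 : ℝ), (1 / 2 : ℝ))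
      (S := Set.Icc (1 / 2) 1 ×ˢ Set.Icc 0 (1 / 2)) (by norm_num) (hlSegments_snd_mem (w := w) hF hδ) x
    simp only [Set.mem_prod, Set.mem_Icc] at this
    exact ⟨this.2.1, this.2.2, this.1.1, this.1.2⟩
  · exact isRCStep_comp_segFun _ Prod.fst (hlSegments_fst_nonneg hw hδ0)
  · exact isRCStep_comp_segFun _ Prod.snd (hlSegments_fst_nonneg hw hδ0)
  · rw [volume_setOf_segFun_hlSegments hw hδ0 (1 / 2 < ·.1)
        (measurableSet_lt measurable_const measurable_fst) (lt_irrefl _),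
      volume_setOf_segFun_hlSegments hw hδ0 (·.2 < 1 / 2)
        (measurableSet_lt measurable_snd measurable_const) (lt_irrefl _),
      ← ENNReal.ofReal_add (hlMass_nonneg hw hδ0 _) (hlMass_nonneg hw hδ0 _)]
    calc ENNReal.ofReal _ ≤ ENNReal.ofReal (Fintype.card ι * (1 / 2)) :=
          ENNReal.ofReal_le_ofReal ((hlMass_half_lt_fst_add_hlMass_snd_lt_half hw hδ0).trans
            (mul_le_mul_of_nonneg_left hmass (Nat.cast_nonneg _)))
      _ = Fintype.card ι / 2 := by
          rw [← div_eq_mul_one_div, ENNReal.ofReal_div_of_pos two_pos, ENNReal.ofReal_natCast,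
            ENNReal.ofReal_ofNat]
  · by_cases hy2 : y = 1 / 2
    · subst hy2
      norm_num
    · rw [hlevel y hy2, hlevel (1 - y) fun h => hy2 (by linarith),
        ← ENNReal.ofReal_mul (div_nonneg (sub_nonneg.mpr hy.2) hy.1.le), hbal y hy]
  · rw [volume_setOf_segFun_hlSegments hw hδ0 (fun q => q.2 + δ ≤ q.1)
        (measurableSet_le (measurable_snd.add_const δ) measurable_fst) (by linarith),
      ENNReal.toReal_ofReal (hlMass_nonneg hw hδ0 _)]
    exact sum_le_hlMass_gap hw hδ0

lemma coordMin_add_le_coordMax {ι : Type*} [Fintype ι] [Nonempty ι] {v : ι → ℝ} {δ : ℝ} {i j : ι}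
    (h : δ ≤ |v i - v j|) : coordMin v + δ ≤ coordMax v := by
  rcases le_abs.mp h with h | h
  · linarith [coordMin_le v j, le_coordMax v i]
  · linarith [coordMin_le v i, le_coordMax v j]

lemma toReal_measure_setOf_eq_sum {β : Type*} [MeasurableSpace β] [MeasurableSingletonClass β]
    {μ : Measure β} [IsFiniteMeasure μ] {F : Finset β} (hF : μ (↑F)ᶜ = 0) (p : β → Prop)
    [DecidablePred p] : (μ {v | p v}).toReal = ∑ v ∈ F with p v, (μ {v}).toReal := by
  rw [← ENNReal.toReal_sum fun v _ => measure_ne_top μ {v}, sum_measure_singleton, coe_filter,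
    ← measure_inter_conull hF]
  congr 2
  ext v
  exact and_comm

lemma levelWeight_toReal_measure_singleton {ι : Type*} [Fintype ι] {μ : Measure (ι → ℝ)}
    [IsFiniteMeasure μ] {F : Finset (ι → ℝ)} (hF : μ (↑F)ᶜ = 0) (y : ℝ) :
    levelWeight F (fun v => (μ {v}).toReal) y = ∑ i, (μ {v | v i = y}).toReal := by
  simp only [levelWeight, card_filter, Nat.cast_sum, Nat.cast_ite, Nat.cast_one, Nat.cast_zero,
    mul_sum, mul_ite, mul_one, mul_zero]
  rw [sum_comm]
  exact sum_congr rfl fun i _ => by rw [toReal_measure_setOf_eq_sum hF, sum_filter]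

section Coherent

variable {Ω : Type} [mΩ : MeasurableSpace Ω] {P : Measure Ω} [IsFiniteMeasure P]

lemma condExp_indicator_one_mem_Icc {m : MeasurableSpace Ω} (hm : m ≤ mΩ) {A : Set Ω}
    (hA : MeasurableSet[mΩ] A) :
    ∀ᵐ ω ∂P, P[A.indicator (fun _ => (1 : ℝ)) | m] ω ∈ Set.Icc 0 1 := by
  have hle : A.indicator (fun _ => (1 : ℝ)) ≤ᵐ[P] fun _ => 1 :=
    Filter.Eventually.of_forall (Set.indicator_le_self' fun _ _ => zero_le_one)
  have h0 : 0 ≤ᵐ[P] A.indicator fun _ => (1 : ℝ) :=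
    Filter.Eventually.of_forall (Set.indicator_nonneg fun _ _ => zero_le_one)
  filter_upwards [condExp_nonneg (m := m) h0,
    condExp_mono (m := m) ((integrable_const (1 : ℝ)).indicator hA) (integrable_const 1) hle]
    with ω h₀ h₁
  exact ⟨h₀, by rwa [condExp_const hm] at h₁⟩

lemma MemCWith.exists_measurable_ae_eq {n m : ℕ} {X : Fin n → Ω → ℝ} {A : Set Ω}
    (hX : MemCWith P X A m) :
    ∃ Y : Ω → Fin n → ℝ, Measurable Y ∧ (∀ᵐ ω ∂P, ∀ i, X i ω = Y ω i) ∧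
      ∃ F : Finset (Fin n → ℝ), (∀ v ∈ F, ∀ i, v i ∈ Set.Icc 0 1) ∧ ∀ᵐ ω ∂P, Y ω ∈ F := by
  classical
  obtain ⟨⟨G, hG, hA, hXY⟩, hfin⟩ := hX
  choose s hs using fun j => (hfin j).imp fun _ h => h.2
  refine ⟨fun ω i => P[A.indicator (fun _ => (1 : ℝ)) | G i] ω,
    measurable_pi_lambda _ fun i => (stronglyMeasurable_condExp.mono (hG i)).measurable,
    ae_all_iff.mpr hXY, Fintype.piFinset fun i => (s i).filter (· ∈ Set.Icc 0 1), ?_, ?_⟩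
  · intro v hv i
    exact (mem_filter.mp (Fintype.mem_piFinset.mp hv i)).2
  · filter_upwards [ae_all_iff.mpr hXY, ae_all_iff.mpr hs,
      ae_all_iff.mpr fun i => condExp_indicator_one_mem_Icc (P := P) (hG i) hA] with ω hX hs h01
    exact Fintype.mem_piFinset.mpr fun i => mem_filter.mpr ⟨hX i ▸ hs i, h01 i⟩

theorem MemC'With.exists_lam_le {n m : ℕ} [Nonempty (Fin n)] {X : Fin n → Ω → ℝ} {A : Set Ω}
    (hX : MemC'With P X A m) {δ : ℝ} (hδ : 1 / 2 ≤ δ) :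
    ∃ H L : ℝ → ℝ, Lam n H L ∧
      (P (maxEvent X δ ∩ A)).toReal ≤ (volume ({x | L x + δ ≤ H x} ∩ Set.Ici 0)).toReal := by
  classical
  obtain ⟨hC, hPA, hbal⟩ := hX
  obtain ⟨Y, hY, hXY, F, hF01, hYF⟩ := hC.exists_measurable_ae_eq
  set μ := (P.restrict A).map Y
  have hμF : μ (↑F)ᶜ = 0 :=
    ae_iff.mp ((ae_map_iff hY.aemeasurable F.measurableSet).mpr (ae_restrict_of_ae hYF))
  have hlevel : ∀ y, levelWeight F (fun v => (μ {v}).toReal) y =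
      ∑ i, (P ({ω | X i ω = y} ∩ A)).toReal := fun y => by
    rw [levelWeight_toReal_measure_singleton hμF]
    refine sum_congr rfl fun i _ => ?_
    have hmeas : MeasurableSet {v : Fin n → ℝ | v i = y} :=
      measurableSet_eq_fun (measurable_pi_apply i) measurable_const
    rw [Measure.map_apply hY hmeas, Measure.restrict_apply (hY hmeas)]
    refine congrArg ENNReal.toReal (measure_congr (Filter.eventuallyEq_set.mpr ?_))
    filter_upwards [hXY] with ω hω
    simp [hω i]
  have hmass : ∑ v ∈ F, (μ {v}).toReal = 1 / 2 := by
    have := toReal_measure_setOf_eq_sum hμF fun _ => True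
    rw [filter_true, Set.ofPred_true, Measure.map_apply hY .univ, Set.preimage_univ,
      Measure.restrict_apply_univ, hPA] at this
    rw [← this, ENNReal.toReal_div]
    norm_num
  obtain ⟨H, L, hHL, hle⟩ := exists_lam_sum_gap_le_volume hδ (fun _ _ => ENNReal.toReal_nonneg)
    hF01 hmass.le fun y hy => by simpa only [hlevel] using hbal y hy
  rw [Fintype.card_fin] at hHL
  refine ⟨H, L, hHL, le_trans ?_ hle⟩
  rw [← toReal_measure_setOf_eq_sum hμF]
  refine ENNReal.toReal_mono (measure_ne_top μ _) ?_
  calc P (maxEvent X δ ∩ A)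
      ≤ P (Y ⁻¹' {v | coordMin v + δ ≤ coordMax v} ∩ A) := by
        refine measure_mono_ae ?_
        filter_upwards [hXY] with ω hω hmem
        obtain ⟨⟨i, j, -, hij⟩, hA⟩ := hmem
        exact ⟨coordMin_add_le_coordMax (i := i) (j := j) (by simpa [hω] using hij), hA⟩
    _ ≤ μ {v | coordMin v + δ ≤ coordMax v} :=
        (Measure.le_restrict_apply _ _).trans (Measure.le_map_apply hY.aemeasurable _)

end Coherent

lemma Lam.toReal_volume_le {k : ℕ} {H L : ℝ → ℝ} (hHL : Lam k H L) {δ : ℝ} (hδ : 1 / 2 < δ) :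
    (volume ({x | L x + δ ≤ H x} ∩ Set.Ici 0)).toReal ≤ k / 2 := by
  have hsub : {x | L x + δ ≤ H x} ∩ Set.Ici 0 ⊆ {x | 1 / 2 < H x} ∩ Set.Ici 0 :=
    fun x ⟨(hx : L x + δ ≤ H x), hx0⟩ => ⟨show 1 / 2 < H x by linarith [(hHL.1 x hx0).1], hx0⟩
  have hle := (measure_mono hsub).trans (le_self_add.trans hHL.2.2.2.1)
  have hfin : (k : ℝ≥0∞) / 2 ≠ ⊤ := ENNReal.div_ne_top (ENNReal.natCast_ne_top k) two_ne_zero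
  simpa [ENNReal.toReal_div] using ENNReal.toReal_mono hfin hle

theorem reduction_to_HL (n : ℕ) (hn : 2 ≤ n) (δ : ℝ)
    (hδ : δ ∈ Set.Ioc (1 / 2 : ℝ) 1) :
    sSup {p : ℝ | ∃ (Ω : Type) (mΩ : MeasurableSpace Ω) (P : Measure Ω),
        IsProbabilityMeasure P ∧ ∃ (m : ℕ) (X : Fin n → Ω → ℝ) (A : Set Ω),
          1 ≤ m ∧ MemC'With P X A m ∧ p = (P (maxEvent X δ ∩ A)).toReal} ≤
      sSup {p : ℝ | ∃ H L : ℝ → ℝ, Lam n H L ∧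
        p = (volume ({x | L x + δ ≤ H x} ∩ Set.Ici 0)).toReal} := by
  have : Nonempty (Fin n) := ⟨⟨0, by omega⟩⟩
  have hbdd : BddAbove {p : ℝ | ∃ H L : ℝ → ℝ, Lam n H L ∧
      p = (volume ({x | L x + δ ≤ H x} ∩ Set.Ici 0)).toReal} :=
    ⟨n / 2, by rintro _ ⟨H, L, hHL, rfl⟩; exact hHL.toReal_volume_le hδ.1⟩
  refine Real.sSup_le ?_ (Real.sSup_nonneg (by rintro _ ⟨H, L, -, rfl⟩; positivity))
  rintro _ ⟨Ω, _, P, _, _, X, A, -, hX, rfl⟩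
  obtain ⟨H, L, hHL, hle⟩ := MemC'With.exists_lam_le hX hδ.1.le
  exact hle.trans (le_csSup hbdd ⟨H, L, hHL, rfl⟩)
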